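/- arXiv:0910.1030 — 5 statements merged into one kernel-verified Lean document; each statement's English description precedes it below -/
import Mathlib

section
/- Let m ≥ 2 and let U be the intersection, over all partitions of {1,...,m} into two nonempty parts S₁ ⊔ S₂, of the subspaces V_{S₁}^{<2|S₁|} ⊗ V_{S₂} + V_{S₁} ⊗ V_{S₂}^{<2|S₂|} of the polynomial ring Q[x₁,...,xₘ] (where each xᵢ has degree 4). Then any monomial of degree 4d ≥ 2m lying in U is pure, i.e., of the form xᵢ^d for some i. -/
/-!
Call `S` low if the variables of `S` carry degree `< 2|S|` in the monomial. As `4d ≥ 2m`,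
the sets `Sᶜ` and `insert x S` cannot both be low (both inequalities are strict between even
numbers). Let `sᵢ ≠ 0`: then `{i}` is not low, and alternating this with the hypothesis that
`S` or `Sᶜ` is low shows, one variable at a time, that no proper set containing `i` is low.
For `{j}ᶜ` with `j ≠ i` this makes `{j}` low, i.e. `sⱼ = 0`.
-/

open MvPolynomial Finset

theorem MvPolynomial.monomial_one_mem_span_iff {σ R : Type*} [CommRing R] [Nontrivial R]
    (P : (σ →₀ ℕ) → Prop) (s : σ →₀ ℕ) :
    monomial s (1 : R) ∈
        Submodule.span R {p : MvPolynomial σ R | ∃ t, p = monomial t 1 ∧ P t} ↔ P s := by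
  have hset : {p : MvPolynomial σ R | ∃ t, p = monomial t 1 ∧ P t} =
      basisMonomials σ R '' {t | P t} := by
    ext p
    simp [and_comm, eq_comm]
  rw [hset, show monomial s (1 : R) = basisMonomials σ R s from rfl,
    Module.Basis.self_mem_span_image, Set.mem_ofPred_eq]

section LowDegree

variable {ι : Type*} [Fintype ι] [DecidableEq ι] {s : ι → ℕ}

/-- The `S`-part of the monomial `∏ xᵢ ^ sᵢ` lies in `V_S^{<2|S|}`, each `xᵢ` having degree 4. -/
def LowDegreeOn (s : ι → ℕ) (S : Finset ι) : Prop :=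
  4 * ∑ i ∈ S, s i < 2 * #S

theorem not_lowDegreeOn_insert_of_lowDegreeOn_compl (htot : 2 * Fintype.card ι ≤ 4 * ∑ i, s i)
    {S : Finset ι} (hSc : LowDegreeOn s Sᶜ) (x : ι) : ¬ LowDegreeOn s (insert x S) := by
  unfold LowDegreeOn at *
  rw [card_compl, ← sum_add_sum_compl S s] at *
  have hsum : ∑ i ∈ S, s i ≤ ∑ i ∈ insert x S, s i := sum_le_sum_of_subset (subset_insert x S)
  have := card_insert_le x S
  have := card_le_univ S
  omega

theorem not_lowDegreeOn_of_mem (htot : 2 * Fintype.card ι ≤ 4 * ∑ i, s i)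
    (hsplit : ∀ S : Finset ι, S ≠ ∅ → S ≠ univ → LowDegreeOn s S ∨ LowDegreeOn s Sᶜ)
    {i : ι} (hi : s i ≠ 0) {S : Finset ι} (hiS : i ∈ S) (hS : S ≠ univ) :
    ¬ LowDegreeOn s S := by
  rw [← insert_eq_of_mem hiS] at hS ⊢
  clear hiS
  induction S using Finset.induction_on with
  | empty =>
    simp only [LowDegreeOn, insert_empty, sum_singleton, card_singleton]
    omega
  | insert x S _ ih =>
    rw [insert_comm] at hS ⊢
    have hS' : insert i S ≠ univ := fun h => hS (by simp [h])
    have hnotlow := ih hS'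
    exact not_lowDegreeOn_insert_of_lowDegreeOn_compl htot
      ((hsplit _ (insert_ne_empty i S) hS').resolve_left hnotlow) x

theorem eq_zero_of_ne_of_ne_zero (htot : 2 * Fintype.card ι ≤ 4 * ∑ i, s i)
    (hsplit : ∀ S : Finset ι, S ≠ ∅ → S ≠ univ → LowDegreeOn s S ∨ LowDegreeOn s Sᶜ)
    {i j : ι} (hi : s i ≠ 0) (hji : j ≠ i) : s j = 0 := by
  have hiS : i ∈ ({j}ᶜ : Finset ι) := by simpa using hji.symm
  have hS : ({j}ᶜ : Finset ι) ≠ univ := (compl_ne_univ_iff_nonempty _).mpr (singleton_nonempty j)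
  have hlow := (hsplit _ (ne_empty_of_mem hiS) hS).resolve_left
    (not_lowDegreeOn_of_mem htot hsplit hi hiS hS)
  simp only [LowDegreeOn, compl_compl, sum_singleton, card_singleton] at hlow
  omega

end LowDegree

/-- In `ℚ[x₁,…,xₘ]` with each `xᵢ` of degree 4, any monomial of degree `4d ≥ 2m`
lying in the intersection, over all partitions `{1,…,m} = S ⊔ Sᶜ` with both parts
nonempty, of the subspaces `V_S^{<2|S|} ⊗ V_{Sᶜ} + V_S ⊗ V_{Sᶜ}^{<2|Sᶜ|}`, is pure,
i.e. of the form `xᵢ^d`. -/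
theorem stmt_0 (m d : ℕ) (hm : 2 ≤ m) (hd : 2 * m ≤ 4 * d)
    (s : Fin m →₀ ℕ) (hdeg : ∑ i, s i = d)
    (hU : ∀ S : Finset (Fin m), S ≠ ∅ → S ≠ Finset.univ →
      (monomial s (1 : ℚ) : MvPolynomial (Fin m) ℚ) ∈
        Submodule.span ℚ {p : MvPolynomial (Fin m) ℚ |
          ∃ t : Fin m →₀ ℕ, p = monomial t (1 : ℚ) ∧
            (4 * ∑ i ∈ S, t i < 2 * S.card ∨ 4 * ∑ i ∈ Sᶜ, t i < 2 * Sᶜ.card)}) :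
    ∃ i : Fin m, s = Finsupp.single i d := by
  have htot : 2 * Fintype.card (Fin m) ≤ 4 * ∑ i, s i := by simpa [hdeg] using hd
  have hsplit (S : Finset (Fin m)) (h₁ : S ≠ ∅) (h₂ : S ≠ univ) :
      LowDegreeOn s S ∨ LowDegreeOn s Sᶜ :=
    (monomial_one_mem_span_iff _ s).mp (hU S h₁ h₂)
  obtain ⟨i, -, hi⟩ := exists_ne_zero_of_sum_ne_zero (s := univ) (f := s) (by omega)
  have hsupp : s = Finsupp.single i (s i) := Finsupp.support_subset_singleton.mp fun j hj => by
    by_contra hji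
    rw [mem_singleton] at hji
    exact Finsupp.mem_support_iff.mp hj (eq_zero_of_ne_of_ne_zero htot hsplit hi hji)
  refine ⟨i, hsupp.trans ?_⟩
  rw [← hdeg, hsupp]
  simp
end

section
/- Let m ≥ 2 and d with 4d ≥ 2m. Any homogeneous symmetric polynomial p(x₁,...,xₘ) of degree 4d (with deg xᵢ = 4) lying in the intersection, over all partitions {1,...,m} = S₁ ⊔ S₂ with both parts nonempty, of V_{S₁}^{<2|S₁|} ⊗ V_{S₂} + V_{S₁} ⊗ V_{S₂}^{<2|S₂|}, is a scalar multiple of the power sum x₁^d + ⋯ + xₘ^d. -/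
/-!
Every monomial `x^t` of `p` has exponent sum `d ≥ m/2`. Give index `k` the weight `2 t_k - 1 ≥ -1`,
so that a set `S` is on the small side of its split exactly when its weight is negative; the total
weight `2d - m` is nonnegative. If `t` had two nonzero exponents `t_i, t_j`, put `i` together with
up to `2 t_i - 1` zero exponents into `S`: either `S` absorbs exactly its weight and `Sᶜ` carries the
nonnegative total, or it absorbs all zeros and `Sᶜ` has only positive weights. Either way neither
side is small. So `p` is supported on the pure powers `x_i^d`, and symmetry equalizes their
coefficients.
-/

open MvPolynomial Finset

lemma support_subset_of_mem_span_monomial {σ R : Type*} [CommSemiring R]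
    {P : (σ →₀ ℕ) → Prop} {p : MvPolynomial σ R}
    (h : p ∈ Submodule.span R {q | ∃ t, q = monomial t (1 : R) ∧ P t})
    {t : σ →₀ ℕ} (ht : t ∈ p.support) : P t := by
  have hset : {q | ∃ t, q = monomial t (1 : R) ∧ P t} = (monomial · 1) '' {t | P t} := by
    ext q
    simp only [Set.mem_ofPred_eq, Set.mem_image]
    exact exists_congr fun t => by rw [eq_comm, and_comm]
  rw [hset, ← restrictSupport_eq_span] at h
  exact h ht

lemma exists_separating_finset_sum_nonneg {ι : Type*} [Fintype ι] [DecidableEq ι]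
    (w : ι → ℤ) (hw : ∀ k, -1 ≤ w k) (hW : 0 ≤ ∑ k, w k) {i j : ι} (hij : i ≠ j)
    (hi : 0 ≤ w i) (hj : 0 ≤ w j) :
    ∃ S : Finset ι, i ∈ S ∧ j ∉ S ∧ 0 ≤ ∑ k ∈ S, w k ∧ 0 ≤ ∑ k ∈ Sᶜ, w k := by
  set N := univ.filter (fun k => w k < 0)
  obtain ⟨Z, hZN, hZcard⟩ := exists_subset_card_eq (min_le_right (w i).toNat #N)
  have hN : ∀ k ∈ N, w k = -1 := fun k hk => by
    have : w k < 0 := by simpa [N] using hk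
    linarith [hw k]
  have hiZ : i ∉ Z := fun h => by simpa [N, not_lt.mpr hi] using hZN h
  have hjZ : j ∉ Z := fun h => by simpa [N, not_lt.mpr hj] using hZN h
  have hS : ∑ k ∈ insert i Z, w k = w i - #Z := by
    rw [sum_insert hiZ, sum_congr rfl fun k hk => hN k (hZN hk)]
    simp [sub_eq_add_neg]
  have hZle : (#Z : ℤ) ≤ w i := by
    have := hZcard.trans_le (min_le_left _ _)
    omega
  refine ⟨insert i Z, mem_insert_self i Z, by simp [hij.symm, hjZ], by rw [hS]; omega, ?_⟩
  have htotal := sum_add_sum_compl (insert i Z) w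
  by_cases hfull : #Z = (w i).toNat
  · omega
  · have hZeq : Z = N := eq_of_subset_of_card_le hZN (by omega)
    refine sum_nonneg fun k hk => ?_
    have hkN : k ∉ N := hZeq ▸ fun h => mem_compl.mp hk (mem_insert_of_mem h)
    simpa [N] using hkN

lemma exists_eq_single_of_forall_split_small {ι : Type*} [Fintype ι] [DecidableEq ι] {d : ℕ}
    (hd0 : d ≠ 0) (hd : Fintype.card ι ≤ 2 * d) (t : ι →₀ ℕ) (hsum : ∑ i, t i = d)
    (hsplit : ∀ S : Finset ι, S ≠ ∅ → S ≠ univ →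
      4 * ∑ i ∈ S, t i < 2 * #S ∨ 4 * ∑ i ∈ Sᶜ, t i < 2 * #Sᶜ) :
    ∃ i, t = Finsupp.single i d := by
  obtain ⟨i, hi⟩ : ∃ i, t i ≠ 0 := by
    by_contra! h
    exact hd0 (by simpa [h] using hsum.symm)
  have weight_sum : ∀ S : Finset ι, ∑ k ∈ S, (2 * (t k : ℤ) - 1) = 2 * ∑ k ∈ S, (t k : ℤ) - #S := by
    intro S
    simp [sum_sub_distrib, mul_sum]
  have hsingle : ∀ j ≠ i, t j = 0 := by
    intro j hji
    by_contra hj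
    obtain ⟨S, hiS, hjS, hS, hSc⟩ := exists_separating_finset_sum_nonneg
      (fun k => 2 * (t k : ℤ) - 1) (fun k => by omega)
      (by rw [weight_sum, card_univ, ← Nat.cast_sum, hsum]; omega)
      hji.symm (by omega) (by omega)
    rw [weight_sum] at hS hSc
    rcases hsplit S (ne_empty_of_mem hiS) (fun h => hjS (h ▸ mem_univ j)) with h | h <;>
      · zify at h; omega
  have ht : t = Finsupp.single i (t i) :=
    Finsupp.support_subset_singleton.mp fun j hj =>
      mem_singleton.mpr (not_imp_comm.mp (hsingle j) (Finsupp.mem_support_iff.mp hj))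
  refine ⟨i, ?_⟩
  rwa [← Fintype.sum_eq_single i hsingle, hsum] at ht

namespace MvPolynomial.IsSymmetric

lemma coeff_single_eq {σ R : Type*} [CommSemiring R] [DecidableEq σ]
    {p : MvPolynomial σ R} (hp : p.IsSymmetric) (i j : σ) (d : ℕ) :
    coeff (Finsupp.single i d) p = coeff (Finsupp.single j d) p :=
  calc coeff (Finsupp.single i d) p
      = coeff ((Finsupp.single j d).mapDomain (Equiv.swap j i)) (rename (Equiv.swap j i) p) := by
        rw [hp, Finsupp.mapDomain_single, Equiv.swap_apply_left]
    _ = coeff (Finsupp.single j d) p := coeff_rename_mapDomain _ (Equiv.injective _) _ _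

lemma eq_smul_psum {σ R : Type*} [CommSemiring R] [Fintype σ] [DecidableEq σ]
    {p : MvPolynomial σ R} (hp : p.IsSymmetric) {d : ℕ} (hd : d ≠ 0)
    (hsupp : ∀ t ∈ p.support, ∃ i, t = Finsupp.single i d) (i₀ : σ) :
    p = coeff (Finsupp.single i₀ d) p • psum σ R d := by
  ext u
  have hpsum : coeff u (psum σ R d) = ∑ i, if Finsupp.single i d = u then 1 else 0 := by
    simp only [psum, coeff_sum, X_pow_eq_monomial, coeff_monomial]
  rw [coeff_smul, hpsum, smul_eq_mul]
  by_cases hu : ∃ i, u = Finsupp.single i d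
  · obtain ⟨i, rfl⟩ := hu
    simp [(Finsupp.single_left_injective hd).eq_iff, hp.coeff_single_eq i i₀]
  · have hcoeff : coeff u p = 0 := notMem_support_iff.mp fun h => hu (hsupp u h)
    rw [hcoeff, sum_eq_zero fun i _ => if_neg fun h => hu ⟨i, h.symm⟩, mul_zero]

end MvPolynomial.IsSymmetric

/-- Any homogeneous symmetric polynomial of degree `4d ≥ 2m` (each variable of degree 4,
so `IsHomogeneous d` in the usual grading) lying in the intersection, over all
partitions `{1,…,m} = S ⊔ Sᶜ` with both parts nonempty, of the subspaces
`V_S^{<2|S|} ⊗ V_{Sᶜ} + V_S ⊗ V_{Sᶜ}^{<2|Sᶜ|}`, is a scalar multiple of the power sum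
`x₁^d + ⋯ + xₘ^d`. -/
theorem stmt_1 (m d : ℕ) (hm : 2 ≤ m) (hd : 2 * m ≤ 4 * d)
    (p : MvPolynomial (Fin m) ℚ)
    (hhom : p.IsHomogeneous d)
    (hsym : ∀ σ : Equiv.Perm (Fin m), rename σ p = p)
    (hU : ∀ S : Finset (Fin m), S ≠ ∅ → S ≠ Finset.univ →
      p ∈ Submodule.span ℚ {q : MvPolynomial (Fin m) ℚ |
        ∃ t : Fin m →₀ ℕ, q = monomial t (1 : ℚ) ∧
          (4 * ∑ i ∈ S, t i < 2 * S.card ∨ 4 * ∑ i ∈ Sᶜ, t i < 2 * Sᶜ.card)}) :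
    ∃ c : ℚ, p = c • ∑ i : Fin m, X i ^ d := by
  have hd0 : d ≠ 0 := by omega
  have hsupp : ∀ t ∈ p.support, ∃ i, t = Finsupp.single i d := by
    intro t ht
    have hsum : ∑ i, t i = d := by
      rw [← Finsupp.degree_eq_sum, Finsupp.degree_eq_weight_one]
      exact hhom (mem_support_iff.mp ht)
    exact exists_eq_single_of_forall_split_small hd0 (by rw [Fintype.card_fin]; omega) t hsum
      fun S hS hSu => support_subset_of_mem_span_monomial (hU S hS hSu) ht
  exact ⟨_, IsSymmetric.eq_smul_psum hsym hd0 hsupp ⟨0, by omega⟩⟩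
end

section
/- Let f = Σₖ fₖ xᵏ be a formal power series over Q with f₀ = 1 and fₖ ≠ 0 for all k, and let F = Σᵢ Fᵢ be the associated multiplicative sequence. Let m ≥ 3 and suppose a symmetric homogeneous polynomial h of degree d in variables x₁,...,xₘ satisfies h(x₁,...,xₘ) = Σᵢ₌₀^d aᵢ xₘ^i F_{d−i}(x₁,...,x_{m−1}) for some rational coefficients aᵢ. Then h = a₀ F_d(x₁,...,xₘ). -/
/-!
Fix distinct variables `v, w` among the first `m - 1`. Reading the expansion of `h`, the
coefficient of `x_v^(d-i) x_m^i` is `aᵢ f_(d-i)`. Swapping `x_w` and `x_m` leaves `h` unchanged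
and turns this monomial into `x_v^(d-i) x_w^i`, to which only the `i = 0` term of the expansion
contributes, namely `a₀ f_i f_(d-i)`: the coefficient of `x_v^A x_w^B` in `F_(A+B)` is `f_A f_B`.
Cancelling `f_(d-i) ≠ 0` gives `aᵢ = a₀ fᵢ`, and then the expansion of `h` is `a₀` times the
recursion for `F_d`.
-/

open MvPolynomial

theorem Finsupp.mapDomain_castSucc_apply_last {N : ℕ} (u : Fin N →₀ ℕ) :
    u.mapDomain Fin.castSucc (Fin.last N) = 0 :=
  Finsupp.mapDomain_of_notMem_range _ _ (by simp)

namespace MvPolynomial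

variable {R : Type*} [CommSemiring R]

theorem coeff_mapDomain_of_rename_eq {ι : Type*} {σ : Equiv.Perm ι} {p : MvPolynomial ι R}
    (hp : rename σ p = p) (μ : ι →₀ ℕ) : coeff (μ.mapDomain σ) p = coeff μ p := by
  conv_lhs => rw [← hp]
  exact coeff_rename_mapDomain _ σ.injective p μ

theorem coeff_X_last_pow_mul_rename_castSucc {N : ℕ} (q : MvPolynomial (Fin N) R)
    (u : Fin N →₀ ℕ) (i j : ℕ) :
    coeff (u.mapDomain Fin.castSucc + Finsupp.single (Fin.last N) i)
        (X (Fin.last N) ^ j * rename Fin.castSucc q) =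
      if j = i then coeff u q else 0 := by
  rw [X_pow_eq_monomial, coeff_monomial_mul', one_mul]
  split_ifs with hle hji hji
  · subst hji
    simp [coeff_rename_mapDomain _ (Fin.castSucc_injective N)]
  · refine coeff_rename_eq_zero _ _ _ fun u' hu' => ?_
    have hlast := congr($hu' (Fin.last N))
    have hji' := Finsupp.single_le_iff.1 hle
    simp [Finsupp.mapDomain_castSucc_apply_last] at hlast hji'
    omega
  · subst hji
    exact absurd le_add_self hle
  · rfl

noncomputable def lastVarSum {N : ℕ} (c : ℕ → R) (p : ℕ → MvPolynomial (Fin N) R) (d : ℕ) :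
    MvPolynomial (Fin (N + 1)) R :=
  ∑ j ∈ Finset.range (d + 1), C (c j) * X (Fin.last N) ^ j * rename Fin.castSucc (p (d - j))

theorem coeff_lastVarSum {N : ℕ} (c : ℕ → R) (p : ℕ → MvPolynomial (Fin N) R) (d : ℕ)
    (u : Fin N →₀ ℕ) (i : ℕ) :
    coeff (u.mapDomain Fin.castSucc + Finsupp.single (Fin.last N) i) (lastVarSum c p d) =
      if i ≤ d then c i * coeff u (p (d - i)) else 0 := by
  simp only [lastVarSum, coeff_sum, mul_assoc, coeff_C_mul,
    coeff_X_last_pow_mul_rename_castSucc, mul_ite, mul_zero, Finset.sum_ite_eq',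
    Finset.mem_range, Nat.lt_succ_iff]

structure IsMultiplicativeSequence (f : ℕ → R) (F : (n : ℕ) → ℕ → MvPolynomial (Fin n) R) :
    Prop where
  one : ∀ i, F 1 i = C (f i) * X 0 ^ i
  succ : ∀ n d, F (n + 1) d = lastVarSum f (F n) d
  isSymmetric : ∀ n i, (F n i).IsSymmetric

namespace IsMultiplicativeSequence

variable {f : ℕ → R} {F : (n : ℕ) → ℕ → MvPolynomial (Fin n) R}
  (hF : IsMultiplicativeSequence f F) (hf0 : f 0 = 1)
include hF hf0

theorem succ_zero (N : ℕ) : F (N + 1) 0 = 1 := by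
  induction N with
  | zero => simp [hF.one, hf0]
  | succ N ih =>
    rw [hF.succ]
    simp [lastVarSum, ih, hf0]

theorem coeff_single_last (N k : ℕ) :
    coeff (Finsupp.single (Fin.last N) k) (F (N + 1) k) = f k := by
  induction N with
  | zero => simp [hF.one, X_pow_eq_monomial, coeff_monomial, Fin.last]
  | succ N _ =>
    rw [hF.succ]
    simpa [hF.succ_zero hf0] using
      coeff_lastVarSum f (F (N + 1)) k 0 k

theorem coeff_single {N : ℕ} (v : Fin N) (k : ℕ) :
    coeff (Finsupp.single v k) (F N k) = f k := by
  obtain ⟨N, rfl⟩ : ∃ N', N = N' + 1 := ⟨N - 1, by have := v.pos; omega⟩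
  have := coeff_mapDomain_of_rename_eq (hF.isSymmetric _ k (Equiv.swap (Fin.last N) v))
    (Finsupp.single (Fin.last N) k)
  rwa [Finsupp.mapDomain_single, Equiv.swap_apply_left, hF.coeff_single_last hf0] at this

theorem coeff_single_add_single {N : ℕ} {v w : Fin N} (hvw : v ≠ w) (A B : ℕ) :
    coeff (Finsupp.single v A + Finsupp.single w B) (F N (A + B)) = f A * f B := by
  obtain ⟨N, rfl⟩ : ∃ N', N = N' + 1 := ⟨N - 1, by have := v.pos; omega⟩
  set σ := Equiv.swap w (Fin.last N)
  obtain ⟨v', hv'⟩ : ∃ v', Fin.castSucc v' = σ v :=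
    Fin.exists_castSucc_eq.2 (by simp [σ, Equiv.swap_apply_eq_iff, hvw])
  have hμ : Finsupp.single v A + Finsupp.single w B =
      ((Finsupp.single v' A).mapDomain Fin.castSucc
        + Finsupp.single (Fin.last N) B).mapDomain σ := by
    simp [Finsupp.mapDomain_add, Finsupp.mapDomain_single, hv', σ]
  rw [hμ, coeff_mapDomain_of_rename_eq (hF.isSymmetric _ _ σ), hF.succ, coeff_lastVarSum,
    if_pos le_add_self, add_tsub_cancel_right, hF.coeff_single hf0, mul_comm]

theorem eq_mul_of_isSymmetric_lastVarSum [IsDomain R] (hf : ∀ k, f k ≠ 0) {n : ℕ} (hn : 2 ≤ n)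
    {a : ℕ → R} {d : ℕ} (hsym : (lastVarSum a (F n) d).IsSymmetric) {i : ℕ} (hi : i ≤ d) :
    a i = a 0 * f i := by
  obtain ⟨k, rfl⟩ : ∃ k, d = k + i := ⟨d - i, by omega⟩
  set v : Fin n := ⟨0, by omega⟩
  set w : Fin n := ⟨1, by omega⟩
  have hvw : v ≠ w := by simp [v, w, Fin.ext_iff]
  set σ := Equiv.swap (Fin.castSucc w) (Fin.last n)
  have hμ : (Finsupp.single v k).mapDomain Fin.castSucc + Finsupp.single (Fin.last n) i =
      ((Finsupp.single v k + Finsupp.single w i).mapDomain Fin.castSucc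
        + Finsupp.single (Fin.last n) 0).mapDomain σ := by
    have hσv : σ (Fin.castSucc v) = Fin.castSucc v :=
      Equiv.swap_apply_of_ne_of_ne (by simpa using hvw) (Fin.castSucc_ne_last v)
    simp only [Finsupp.mapDomain_add, Finsupp.mapDomain_single, Finsupp.single_zero, add_zero,
      hσv, σ, Equiv.swap_apply_left]
  have key := coeff_mapDomain_of_rename_eq (hsym σ)
    ((Finsupp.single v k + Finsupp.single w i).mapDomain Fin.castSucc
        + Finsupp.single (Fin.last n) 0)
  rw [← hμ, coeff_lastVarSum, coeff_lastVarSum, if_pos le_add_self, if_pos (Nat.zero_le _),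
    Nat.add_sub_cancel, Nat.sub_zero, hF.coeff_single hf0,
    hF.coeff_single_add_single hf0 hvw] at key
  exact mul_right_cancel₀ (hf k) (key.trans (by ring))

end IsMultiplicativeSequence

end MvPolynomial

theorem stmt_2_general (f : ℕ → ℚ) (hf0 : f 0 = 1) (hf : ∀ k, f k ≠ 0)
    (F : (n : ℕ) → ℕ → MvPolynomial (Fin n) ℚ)
    (hFone : ∀ i, F 1 i = C (f i) * X 0 ^ i)
    (hFsym : ∀ (n i : ℕ) (σ : Equiv.Perm (Fin n)), rename σ (F n i) = F n i)
    (hFrec : ∀ n d, F (n + 1) d =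
      ∑ j ∈ Finset.range (d + 1),
        C (f j) * X (Fin.last n) ^ j * rename Fin.castSucc (F n (d - j)))
    (n : ℕ) (hn : 2 ≤ n) (d : ℕ)
    (h : MvPolynomial (Fin (n + 1)) ℚ)
    (hsym : ∀ σ : Equiv.Perm (Fin (n + 1)), rename σ h = h)
    (a : ℕ → ℚ)
    (hh : h = ∑ i ∈ Finset.range (d + 1),
      C (a i) * X (Fin.last n) ^ i * rename Fin.castSucc (F n (d - i))) :
    h = C (a 0) * F (n + 1) d := by
  have hF : IsMultiplicativeSequence f F := ⟨hFone, hFrec, hFsym⟩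
  subst hh
  rw [hFrec, Finset.mul_sum]
  refine Finset.sum_congr rfl fun i hi => ?_
  rw [hF.eq_mul_of_isSymmetric_lastVarSum hf0 hf hn hsym (Finset.mem_range_succ_iff.1 hi), C_mul]
  ring

/-- Lemma on multiplicative sequences: if `f = Σ fₖxᵏ` has `f₀ = 1` and all `fₖ ≠ 0`,
`F` is the associated multiplicative sequence (characterized by `Fᵢ = fᵢxⁱ` in one
variable and the factorization `F(x₁,…,x_{m}) = f(xₘ)·F(x₁,…,x_{m−1})`), `m = n+1 ≥ 3`,
and a symmetric homogeneous polynomial `h` of degree `d` in `m` variables satisfies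
`h = Σᵢ aᵢ xₘⁱ F_{d−i}(x₁,…,x_{m−1})`, then `h = a₀ F_d(x₁,…,xₘ)`. -/
theorem stmt_2 (f : ℕ → ℚ) (hf0 : f 0 = 1) (hf : ∀ k, f k ≠ 0)
    (F : (n : ℕ) → ℕ → MvPolynomial (Fin n) ℚ)
    (hFone : ∀ i, F 1 i = C (f i) * X 0 ^ i)
    (hFsym : ∀ (n i : ℕ) (σ : Equiv.Perm (Fin n)), rename σ (F n i) = F n i)
    (hFhom : ∀ n i, (F n i).IsHomogeneous i)
    (hFrec : ∀ n d, F (n + 1) d =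
      ∑ j ∈ Finset.range (d + 1),
        C (f j) * X (Fin.last n) ^ j * rename Fin.castSucc (F n (d - j)))
    (n : ℕ) (hn : 2 ≤ n) (d : ℕ)
    (h : MvPolynomial (Fin (n + 1)) ℚ)
    (hsym : ∀ σ : Equiv.Perm (Fin (n + 1)), rename σ h = h)
    (hhom : h.IsHomogeneous d)
    (a : ℕ → ℚ)
    (hh : h = ∑ i ∈ Finset.range (d + 1),
      C (a i) * X (Fin.last n) ^ i * rename Fin.castSucc (F n (d - i))) :
    h = C (a 0) * F (n + 1) d :=
  stmt_2_general f hf0 hf F hFone hFsym hFrec n hn d h hsym a hh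
end

section
/- In the situation of the previous lemma, the coefficients satisfy aᵢ fⱼ = aⱼ fᵢ for all i, j with 0 ≤ i + j ≤ d, and consequently aⱼ = a₀ fⱼ for all j ≤ d. -/
open MvPolynomial

private lemma coeffXY (c : ℚ) (i j i₀ j₀ : ℕ) :
    Polynomial.coeff (Polynomial.coeff
      ((Polynomial.C (Polynomial.C c)) * Polynomial.X ^ i * Polynomial.C Polynomial.X ^ j
        : Polynomial (Polynomial ℚ)) i₀) j₀ =
      if i = i₀ ∧ j = j₀ then c else 0 := by
  have key : (Polynomial.C (Polynomial.C c)) * Polynomial.X ^ i * Polynomial.C Polynomial.X ^ j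
      = Polynomial.C (Polynomial.C c * Polynomial.X ^ j) * Polynomial.X ^ i
        := by
    rw [Polynomial.C_mul, Polynomial.C_pow]; ring
  rw [key, Polynomial.coeff_C_mul_X_pow]
  by_cases h1 : i = i₀ <;> by_cases h2 : j = j₀ <;>
    simp [h1, h2, Polynomial.coeff_C_mul_X_pow, eq_comm]

private lemma coeffYX (c : ℚ) (i j i₀ j₀ : ℕ) :
    Polynomial.coeff (Polynomial.coeff
      ((Polynomial.C (Polynomial.C c)) * Polynomial.C Polynomial.X ^ i * Polynomial.X ^ j
        : Polynomial (Polynomial ℚ)) i₀) j₀ =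
      if i = j₀ ∧ j = i₀ then c else 0 := by
  rw [mul_right_comm, coeffXY]
  by_cases h1 : i = j₀ <;> by_cases h2 : j = i₀ <;> simp [h1, h2]

private lemma sum_pick (d i₀ j₀ : ℕ) (hd : i₀ + j₀ ≤ d) (c : ℕ → ℕ → ℚ) :
    (∑ i ∈ Finset.range (d+1), ∑ j ∈ Finset.range (d - i + 1),
      if i = i₀ ∧ j = j₀ then c i j else 0) = c i₀ j₀ := by
  rw [Finset.sum_eq_single i₀]
  · rw [Finset.sum_eq_single j₀]
    · simp
    · intro b _ hb; simp [hb]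
    · intro hb; exfalso; apply hb; simp only [Finset.mem_range]; omega
  · intro b _ hb
    apply Finset.sum_eq_zero
    intro j _
    simp [hb]
  · intro hb; exfalso; apply hb; simp only [Finset.mem_range]; omega

private lemma evalF {A : Type} [CommRing A] [Algebra ℚ A]
    (f : ℕ → ℚ) (hf0 : f 0 = 1)
    (F : (n : ℕ) → ℕ → MvPolynomial (Fin n) ℚ)
    (hFone : ∀ i, F 1 i = C (f i) * X 0 ^ i)
    (hFrec : ∀ n d, F (n + 1) d = ∑ j ∈ Finset.range (d + 1),
        C (f j) * X (Fin.last n) ^ j * rename Fin.castSucc (F n (d - j))) :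
    ∀ m k, aeval (fun t : Fin (m + 1) => if t = 0 then (1 : A) else 0) (F (m + 1) k)
      = algebraMap ℚ A (f k) := by
  intro m
  induction m with
  | zero =>
    intro k
    rw [hFone]
    simp
  | succ m ih =>
    intro k
    rw [hFrec, map_sum, Finset.sum_eq_single 0]
    · have hcomp : ((fun t : Fin (m+2) => if t = 0 then (1:A) else 0) ∘ Fin.castSucc)
          = fun t : Fin (m+1) => if t = 0 then (1:A) else 0 := by
        funext t
        simp [Function.comp, Fin.castSucc_eq_zero_iff]
      simp only [pow_zero, mul_one, map_mul, aeval_C, aeval_rename, map_pow, aeval_X]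
      rw [hcomp, ih, hf0]
      simp
    · intro j hj hj0
      have hlast : (Fin.last (m+1) : Fin (m+2)) ≠ 0 := by
        simp [Fin.ext_iff]
      simp [map_mul, aeval_X, hlast, zero_pow hj0]
    · intro h0
      simp at h0

private lemma evalF2 {A : Type} [CommRing A] [Algebra ℚ A]
    (f : ℕ → ℚ) (hf0 : f 0 = 1)
    (F : (n : ℕ) → ℕ → MvPolynomial (Fin n) ℚ)
    (hFone : ∀ i, F 1 i = C (f i) * X 0 ^ i)
    (hFrec : ∀ n d, F (n + 1) d = ∑ j ∈ Finset.range (d + 1),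
        C (f j) * X (Fin.last n) ^ j * rename Fin.castSucc (F n (d - j)))
    (m : ℕ) (y : A) (D : ℕ) :
    aeval (fun t : Fin (m+1+1) => if t = Fin.last (m+1) then y else if t = 0 then 1 else 0)
        (F (m+1+1) D)
      = ∑ j ∈ Finset.range (D+1), algebraMap ℚ A (f j * f (D - j)) * y ^ j := by
  rw [hFrec, map_sum]
  refine Finset.sum_congr rfl fun j hj => ?_
  rw [map_mul, map_mul, aeval_C, map_pow, aeval_X, aeval_rename]
  have hcomp : ((fun t : Fin (m+1+1) => if t = Fin.last (m+1) then y else if t = 0 then 1 else 0)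
      ∘ Fin.castSucc) = fun t : Fin (m+1) => if t = 0 then (1:A) else 0 := by
    funext t
    have h1 : Fin.castSucc t ≠ Fin.last (m+1) := (Fin.castSucc_lt_last t).ne
    simp [Function.comp, h1, Fin.castSucc_eq_zero_iff]
  rw [hcomp, evalF f hf0 F hFone hFrec m]
  rw [if_pos rfl, map_mul]
  ring

private lemma evalH {A : Type} [CommRing A] [Algebra ℚ A]
    (f : ℕ → ℚ) (hf0 : f 0 = 1)
    (F : (n : ℕ) → ℕ → MvPolynomial (Fin n) ℚ)
    (hFone : ∀ i, F 1 i = C (f i) * X 0 ^ i)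
    (hFrec : ∀ n d, F (n + 1) d = ∑ j ∈ Finset.range (d + 1),
        C (f j) * X (Fin.last n) ^ j * rename Fin.castSucc (F n (d - j)))
    (m : ℕ) (d : ℕ) (a : ℕ → ℚ)
    (h : MvPolynomial (Fin (m+1+1+1)) ℚ)
    (hh : h = ∑ i ∈ Finset.range (d + 1),
      C (a i) * X (Fin.last (m+1+1)) ^ i * rename Fin.castSucc (F (m+1+1) (d - i)))
    (x y : A) :
    aeval (fun t : Fin (m+1+1+1) => if t = Fin.last (m+1+1) then x
        else if t = Fin.castSucc (Fin.last (m+1)) then y else if t = 0 then 1 else 0) h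
      = ∑ i ∈ Finset.range (d+1), ∑ j ∈ Finset.range (d - i + 1),
          algebraMap ℚ A (a i * (f j * f (d - i - j))) * x ^ i * y ^ j := by
  rw [hh, map_sum]
  refine Finset.sum_congr rfl fun i hi => ?_
  rw [map_mul, map_mul, aeval_C, map_pow, aeval_X, aeval_rename]
  have hcomp : ((fun t : Fin (m+1+1+1) => if t = Fin.last (m+1+1) then x
        else if t = Fin.castSucc (Fin.last (m+1)) then y else if t = 0 then 1 else 0)
      ∘ Fin.castSucc)
      = fun t : Fin (m+1+1) => if t = Fin.last (m+1) then y else if t = 0 then 1 else 0 := by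
    funext t
    have h1 : Fin.castSucc t ≠ Fin.last (m+1+1) := (Fin.castSucc_lt_last t).ne
    have h2 : Fin.castSucc t = Fin.castSucc (Fin.last (m+1)) ↔ t = Fin.last (m+1) :=
      (Fin.castSucc_injective _).eq_iff
    simp only [Function.comp, h1, if_false, h2, Fin.castSucc_eq_zero_iff]
  rw [hcomp, evalF2 f hf0 F hFone hFrec m y (d - i)]
  rw [if_pos rfl, Finset.mul_sum]
  refine Finset.sum_congr rfl fun j hj => ?_
  simp only [map_mul]
  ring

/-- In the situation of the multiplicative-sequence lemma, the coefficients satisfy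
`aᵢfⱼ = aⱼfᵢ` for all `i + j ≤ d`, and consequently `aⱼ = a₀fⱼ` for all `j ≤ d`. -/
theorem stmt_3 (f : ℕ → ℚ) (hf0 : f 0 = 1) (hf : ∀ k, f k ≠ 0)
    (F : (n : ℕ) → ℕ → MvPolynomial (Fin n) ℚ)
    (hFone : ∀ i, F 1 i = C (f i) * X 0 ^ i)
    (hFsym : ∀ (n i : ℕ) (σ : Equiv.Perm (Fin n)), rename σ (F n i) = F n i)
    (hFhom : ∀ n i, (F n i).IsHomogeneous i)
    (hFrec : ∀ n d, F (n + 1) d =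
      ∑ j ∈ Finset.range (d + 1),
        C (f j) * X (Fin.last n) ^ j * rename Fin.castSucc (F n (d - j)))
    (n : ℕ) (hn : 2 ≤ n) (d : ℕ)
    (h : MvPolynomial (Fin (n + 1)) ℚ)
    (hsym : ∀ σ : Equiv.Perm (Fin (n + 1)), rename σ h = h)
    (hhom : h.IsHomogeneous d)
    (a : ℕ → ℚ)
    (hh : h = ∑ i ∈ Finset.range (d + 1),
      C (a i) * X (Fin.last n) ^ i * rename Fin.castSucc (F n (d - i))) :
    (∀ i j : ℕ, i + j ≤ d → a i * f j = a j * f i) ∧ (∀ j ≤ d, a j = a 0 * f j) := by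
  obtain ⟨m, rfl⟩ : ∃ m, n = m + 1 + 1 := ⟨n - 2, by omega⟩
  set u : Fin (m+1+1+1) := Fin.last (m+1+1) with hu_def
  set v : Fin (m+1+1+1) := Fin.castSucc (Fin.last (m+1)) with hv_def
  have huv : u ≠ v := by
    simp [hu_def, hv_def, Fin.ext_iff]
  have hv0 : v ≠ 0 := by
    simp [hv_def, Fin.ext_iff]
  have hu0 : u ≠ 0 := by
    simp [hu_def, Fin.ext_iff]
  have main : ∀ i j : ℕ, i + j ≤ d → a i * f j = a j * f i := by
    intro i₀ j₀ hd
    set x : Polynomial (Polynomial ℚ) := Polynomial.X with hx_def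
    set y : Polynomial (Polynomial ℚ) := Polynomial.C Polynomial.X with hy_def
    set V : Polynomial (Polynomial ℚ) → Polynomial (Polynomial ℚ) → Fin (m+1+1+1) → Polynomial (Polynomial ℚ) := fun x y t =>
      if t = u then x else if t = v then y else if t = 0 then 1 else 0 with hV_def
    have e1 : aeval (V x y) h = ∑ i ∈ Finset.range (d+1), ∑ j ∈ Finset.range (d - i + 1),
        algebraMap ℚ (Polynomial (Polynomial ℚ)) (a i * (f j * f (d - i - j))) * x ^ i * y ^ j :=
      evalH f hf0 F hFone hFrec m d a h hh x y
    have e2 : aeval (V x y) h = ∑ i ∈ Finset.range (d+1), ∑ j ∈ Finset.range (d - i + 1),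
        algebraMap ℚ (Polynomial (Polynomial ℚ)) (a i * (f j * f (d - i - j))) * y ^ i * x ^ j := by
      have hswap : rename (Equiv.swap u v) h = h := hsym (Equiv.swap u v)
      conv_lhs => rw [← hswap]
      rw [aeval_rename]
      have hVc : (V x y) ∘ (Equiv.swap u v) = V y x := by
        funext t
        by_cases htu : t = u
        · simp [htu, hV_def, Equiv.swap_apply_left, huv, Ne.symm huv]
        · by_cases htv : t = v
          · simp [htv, hV_def, Equiv.swap_apply_right, huv, Ne.symm huv]
          · simp [hV_def, Equiv.swap_apply_of_ne_of_ne htu htv, htu, htv]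
      rw [hVc]
      exact evalH f hf0 F hFone hFrec m d a h hh y x
    have e3 := e1.symm.trans e2
    have e4 := congrArg (fun p : Polynomial (Polynomial ℚ) => (p.coeff i₀).coeff j₀) e3
    have algrw : ∀ q : ℚ, algebraMap ℚ (Polynomial (Polynomial ℚ)) q
        = Polynomial.C (Polynomial.C q) := by
      intro q
      rw [Polynomial.algebraMap_apply, Polynomial.algebraMap_apply]
      simp
    simp only [Polynomial.finset_sum_coeff, algrw, hx_def, hy_def, coeffXY, coeffYX] at e4
    rw [sum_pick d i₀ j₀ hd] at e4
    have hd' : j₀ + i₀ ≤ d := by omega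
    have e5 : (∑ i ∈ Finset.range (d+1), ∑ j ∈ Finset.range (d - i + 1),
        if i = j₀ ∧ j = i₀ then a i * (f j * f (d - i - j)) else 0)
        = a j₀ * (f i₀ * f (d - j₀ - i₀)) := sum_pick d j₀ i₀ hd' _
    rw [e5] at e4
    have hsub : d - j₀ - i₀ = d - i₀ - j₀ := by omega
    rw [hsub] at e4
    have hfk := hf (d - i₀ - j₀)
    have e6 : a i₀ * f j₀ * f (d - i₀ - j₀) = a j₀ * f i₀ * f (d - i₀ - j₀) := by
      rw [mul_assoc, mul_assoc]
      exact e4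
    exact mul_right_cancel₀ hfk e6
  refine ⟨main, fun j hj => ?_⟩
  have hm := main 0 j (by omega)
  rw [hf0] at hm
  linarith [hm]
end

section
/- Let V be the 3-dimensional Q-vector space with basis z₁, z₂, z₃ on which Σ₃ acts by permuting the basis, and let Φ = Σ_{σ∈Σ₃} σ be the averaging operator on Sym^d(V). For d ≥ 1, the image under Φ of the (d+1)-dimensional subspace X = span{ z₁^k (2z₁+z₂+z₃)^{d−k} : 0 ≤ k ≤ d } ⊂ Sym^d(V) has dimension exactly d. -/
open MvPolynomial Finset

noncomputable def ps (m : ℕ) : MvPolynomial (Fin 3) ℚ := X 0 ^ m + X 1 ^ m + X 2 ^ m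
noncomputable def s1 : MvPolynomial (Fin 3) ℚ := X 0 + X 1 + X 2

lemma perm_sum {M : Type*} [AddCommMonoid M] (f : Fin 3 → M) :
    ∑ σ : Equiv.Perm (Fin 3), f (σ 0) = 2 • (f 0 + f 1 + f 2) := by
  rw [Finset.sum_comp f (fun σ : Equiv.Perm (Fin 3) => σ 0)]
  have himg : (Finset.univ.image (fun σ : Equiv.Perm (Fin 3) => σ 0)) = Finset.univ := by decide
  rw [himg, Fin.sum_univ_three]
  have h0 : (Finset.univ.filter (fun σ : Equiv.Perm (Fin 3) => σ 0 = 0)).card = 2 := by decide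
  have h1 : (Finset.univ.filter (fun σ : Equiv.Perm (Fin 3) => σ 0 = 1)).card = 2 := by decide
  have h2 : (Finset.univ.filter (fun σ : Equiv.Perm (Fin 3) => σ 0 = 2)).card = 2 := by decide
  rw [h0, h1, h2, smul_add, smul_add]

lemma rename_s1 (σ : Equiv.Perm (Fin 3)) : rename σ s1 = s1 := by
  have : s1 = ∑ i : Fin 3, X i := by rw [Fin.sum_univ_three]; rfl
  rw [this, map_sum]
  simp only [rename_X]
  exact Equiv.sum_comp σ (fun i => (X i : MvPolynomial (Fin 3) ℚ))

noncomputable def Phi : MvPolynomial (Fin 3) ℚ →ₗ[ℚ] MvPolynomial (Fin 3) ℚ :=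
  ∑ σ : Equiv.Perm (Fin 3),
    (rename σ : MvPolynomial (Fin 3) ℚ →ₐ[ℚ] MvPolynomial (Fin 3) ℚ).toLinearMap

lemma phi_apply (d k : ℕ) (hk : k ≤ d) :
    Phi (X 0 ^ k * (s1 + X 0) ^ (d - k)) =
      ∑ j ∈ range (d - k + 1), ((2 * ((d - k).choose j) : ℚ)) • (s1 ^ j * ps (d - j)) := by
  set n := d - k with hn
  rw [Phi, LinearMap.sum_apply]
  have hren : ∀ σ : Equiv.Perm (Fin 3),
      (rename σ : MvPolynomial (Fin 3) ℚ →ₐ[ℚ] MvPolynomial (Fin 3) ℚ).toLinearMap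
        (X 0 ^ k * (s1 + X 0) ^ n)
      = ∑ j ∈ range (n + 1), (((n.choose j) : ℚ)) • (s1 ^ j * (X (σ 0)) ^ (d - j)) := by
    intro σ
    simp only [AlgHom.toLinearMap_apply, map_mul, map_pow, map_add, rename_X, rename_s1]
    rw [add_pow]
    rw [Finset.mul_sum]
    refine Finset.sum_congr rfl (fun j hj => ?_)
    have hjn : j ≤ n := Nat.lt_succ_iff.mp (Finset.mem_range.mp hj)
    have hexp : k + (n - j) = d - j := by omega
    rw [smul_eq_C_mul]
    have : X (σ 0) ^ k * (s1 ^ j * X (σ 0) ^ (n - j) * ((n.choose j : ℕ) : MvPolynomial (Fin 3) ℚ))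
        = s1 ^ j * (X (σ 0) ^ (k + (n - j))) * ((n.choose j : ℕ) : MvPolynomial (Fin 3) ℚ) := by
      rw [pow_add]; ring
    rw [this, hexp]
    simp [map_natCast]
    ring
  rw [Finset.sum_congr rfl (fun σ _ => hren σ)]
  rw [Finset.sum_comm]
  refine Finset.sum_congr rfl (fun j hj => ?_)
  rw [← Finset.smul_sum]
  have : ∑ σ : Equiv.Perm (Fin 3), s1 ^ j * (X (σ 0)) ^ (d - j)
      = s1 ^ j * (2 • ps (d - j)) := by
    rw [← Finset.mul_sum, perm_sum (fun i => (X i : MvPolynomial (Fin 3) ℚ) ^ (d - j))]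
    rfl
  rw [this, two_smul, mul_add]
  module

lemma s1_ne_zero : s1 ≠ 0 := by
  intro h
  have := congrArg (aeval (![1,0,0] : Fin 3 → ℚ)) h
  simp [s1] at this

lemma indep (d : ℕ) (hd : 1 ≤ d) : ∀ c : ℕ → ℚ,
    (∑ j ∈ range d, c j • (s1 ^ j * ps (d - j))) = 0 → ∀ j < d, c j = 0 := by
  induction d, hd using Nat.le_induction with
  | base =>
    intro c h j hj
    interval_cases j
    have := congrArg (aeval (![1,0,0] : Fin 3 → ℚ)) h
    simp [s1, ps] at this
    exact this
  | succ d hd IH =>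
    intro c h
    have hc0 : c 0 = 0 := by
      have hv : ∀ v : Fin 3 → ℚ, v 0 + v 1 + v 2 = 0 →
          c 0 * (v 0 ^ (d+1) + v 1 ^ (d+1) + v 2 ^ (d+1)) = 0 := by
        intro v hv0
        have := congrArg (aeval v) h
        rw [map_sum, map_zero] at this
        rw [Finset.sum_eq_single_of_mem 0 (Finset.mem_range.mpr (Nat.succ_pos d))] at this
        · simp [s1, ps, hv0] at this
          linear_combination this
        · intro j _ hj0
          have : (aeval v) s1 = 0 := by simpa [s1] using hv0
          simp [map_smul, map_mul, map_pow, this, zero_pow hj0]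
      rcases Nat.even_or_odd (d+1) with he | ho
      · have := hv ![1,0,-1] (by norm_num [show ((![1,0,-1] : Fin 3 → ℚ) 2) = -1 from rfl])
        norm_num [show ((![1,0,-1] : Fin 3 → ℚ) 2) = -1 from rfl] at this
        rw [he.neg_one_pow] at this
        norm_num at this
        exact this
      · have := hv ![1,1,-2] (by norm_num [show ((![1,1,-2] : Fin 3 → ℚ) 2) = -2 from rfl])
        have h2 : ((-2 : ℚ)) ^ (d+1) = -(2 ^ (d+1)) := ho.neg_pow 2
        rw [show ((![1,1,-2] : Fin 3 → ℚ) 0) = 1 from rfl] at this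
        norm_num [h2, show ((![1,1,-2] : Fin 3 → ℚ) 2) = -2 from rfl] at this
        rcases this with h' | h'
        · exact h'
        · exfalso
          have : (2:ℚ) ^ (d+1) ≥ 2 ^ 2 := by
            apply pow_le_pow_right₀ (by norm_num) (by omega)
          nlinarith
    have hT : s1 * (∑ j ∈ range d, (fun j => c (j+1)) j • (s1 ^ j * ps (d - j))) = 0 := by
      rw [Finset.mul_sum]
      rw [Finset.sum_range_succ'] at h
      rw [hc0] at h
      simp only [zero_smul, add_zero] at h
      rw [← h]
      refine Finset.sum_congr rfl (fun j hj => ?_)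
      have : d + 1 - (j + 1) = d - j := by omega
      rw [this, mul_smul_comm]
      congr 1
      ring
    have hTz : (∑ j ∈ range d, (fun j => c (j+1)) j • (s1 ^ j * ps (d - j))) = 0 := by
      rcases mul_eq_zero.mp hT with h' | h'
      · exact absurd h' s1_ne_zero
      · exact h'
    intro j hj
    rcases Nat.eq_zero_or_pos j with rfl | hj0
    · exact hc0
    · obtain ⟨j', rfl⟩ : ∃ j', j = j' + 1 := ⟨j - 1, by omega⟩
      exact IH (fun j => c (j+1)) hTz j' (by omega)

lemma li (d : ℕ) (hd : 1 ≤ d) :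
    LinearIndependent ℚ (fun j : Fin d => s1 ^ (j : ℕ) * ps (d - (j : ℕ))) := by
  rw [Fintype.linearIndependent_iff]
  intro g hg i
  set c : ℕ → ℚ := fun n => if h : n < d then g ⟨n, h⟩ else 0 with hc
  have hsum : (∑ j ∈ range d, c j • (s1 ^ j * ps (d - j))) = 0 := by
    rw [← Fin.sum_univ_eq_sum_range (fun j => c j • (s1 ^ j * ps (d - j))) d, ← hg]
    refine Finset.sum_congr rfl (fun i _ => ?_)
    simp [hc, i.isLt]
  have := indep d hd c hsum i.val i.isLt
  simpa [hc, i.isLt] using this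

lemma u'_mem (d j : ℕ) (hd : 1 ≤ d) (hj : j ≤ d) :
    s1 ^ j * ps (d - j) ∈
      Submodule.span ℚ ((fun j => s1 ^ j * ps (d - j)) '' {j : ℕ | j ≤ d - 1}) := by
  rcases Nat.lt_or_ge j d with hlt | hge
  · exact Submodule.subset_span ⟨j, (by omega : j ≤ d - 1), rfl⟩
  · have hjd : j = d := le_antisymm hj hge
    rw [hjd]
    have h1 : ps (d - (d - 1)) = s1 := by
      have : d - (d - 1) = 1 := by omega
      rw [this]; simp [ps, s1]
    have key : s1 ^ d * ps (d - d) = (3 : ℚ) • (s1 ^ (d - 1) * ps (d - (d - 1))) := by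
      rw [h1, Nat.sub_self]
      have : s1 ^ (d - 1) * s1 = s1 ^ d := by
        rw [← pow_succ]; congr 1; omega
      rw [this]
      have hps0 : ps 0 = (3 : MvPolynomial (Fin 3) ℚ) := by
        simp only [ps, pow_zero]
        norm_num
      rw [hps0, smul_eq_C_mul]
      simp only [map_ofNat]
      ring
    rw [key]
    exact Submodule.smul_mem _ _ (Submodule.subset_span ⟨d - 1, by simp, rfl⟩)

lemma span_eq (d : ℕ) (hd : 1 ≤ d) :
    Submodule.span ℚ ((fun k : ℕ => Phi (X 0 ^ k * (s1 + X 0) ^ (d - k))) '' {k : ℕ | k ≤ d})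
      = Submodule.span ℚ ((fun j => s1 ^ j * ps (d - j)) '' {j : ℕ | j ≤ d - 1}) := by
  apply le_antisymm
  · rw [Submodule.span_le]
    rintro _ ⟨k, hk, rfl⟩
    simp only [Set.mem_setOf_eq] at hk
    show Phi (X 0 ^ k * (s1 + X 0) ^ (d - k)) ∈ _
    rw [phi_apply d k hk]
    apply Submodule.sum_mem
    intro j hj
    apply Submodule.smul_mem
    exact u'_mem d j hd (by have := Finset.mem_range.mp hj; omega)
  · rw [Submodule.span_le]
    rintro _ ⟨m, hm, rfl⟩
    simp only [Set.mem_setOf_eq] at hm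
    show s1 ^ m * ps (d - m) ∈ _
    set Q := Submodule.span ℚ
      ((fun k : ℕ => Phi (X 0 ^ k * (s1 + X 0) ^ (d - k))) '' {k : ℕ | k ≤ d}) with hQ
    clear_value Q
    induction m using Nat.strong_induction_on with
    | _ m IH =>
      have hqmem : Phi (X 0 ^ (d - m) * (s1 + X 0) ^ (d - (d - m))) ∈ Q := by
        rw [hQ]
        exact Submodule.subset_span ⟨d - m, by simp, rfl⟩
      have hdm : d - (d - m) = m := by omega
      rw [phi_apply d (d - m) (by omega), hdm] at hqmem
      rw [Finset.sum_range_succ, Nat.choose_self] at hqmem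
      have h2 : ((2 : ℚ)) • (s1 ^ m * ps (d - m)) =
          Phi (X 0 ^ (d - m) * (s1 + X 0) ^ (d - (d - m)))
            - ∑ j ∈ range m, ((2 * ((m).choose j) : ℚ)) • (s1 ^ j * ps (d - j)) := by
        rw [phi_apply d (d - m) (by omega), hdm, Finset.sum_range_succ, Nat.choose_self]
        push_cast
        module
      have hmem2 : ((2 : ℚ)) • (s1 ^ m * ps (d - m)) ∈ Q := by
        rw [h2]
        apply Submodule.sub_mem _ _ (Submodule.sum_mem _ ?_)
        · rw [phi_apply d (d - m) (by omega), hdm, Finset.sum_range_succ, Nat.choose_self]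
          exact hqmem
        · intro j hj
          have hj' := Finset.mem_range.mp hj
          exact Submodule.smul_mem _ _ (IH j hj' (by omega))
      have := Submodule.smul_mem Q ((2 : ℚ)⁻¹) hmem2
      rwa [smul_smul, inv_mul_cancel₀ (by norm_num), one_smul] at this

/-- Let `Σ₃` act on `ℚ[z₁,z₂,z₃]` by permuting variables and `Φ = Σ_{σ∈Σ₃} σ` the
symmetrization operator.  For `d ≥ 1`, the image under `Φ` of the subspace
`X = span{ z₁^k (2z₁+z₂+z₃)^{d−k} : 0 ≤ k ≤ d }` has dimension exactly `d`. -/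
theorem stmt_14 (d : ℕ) (hd : 1 ≤ d) :
    Module.finrank ℚ
      ↥(Submodule.map
          (∑ σ : Equiv.Perm (Fin 3),
            (rename σ : MvPolynomial (Fin 3) ℚ →ₐ[ℚ] MvPolynomial (Fin 3) ℚ).toLinearMap)
          (Submodule.span ℚ
            ((fun k : ℕ =>
                (X 0 : MvPolynomial (Fin 3) ℚ) ^ k *
                  (2 • X 0 + X 1 + X 2) ^ (d - k)) '' {k : ℕ | k ≤ d}))) = d := by
  have hPhi : (∑ σ : Equiv.Perm (Fin 3),
      (rename σ : MvPolynomial (Fin 3) ℚ →ₐ[ℚ] MvPolynomial (Fin 3) ℚ).toLinearMap) = Phi := rfl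
  have hgen : (fun k : ℕ =>
      (X 0 : MvPolynomial (Fin 3) ℚ) ^ k * (2 • X 0 + X 1 + X 2) ^ (d - k))
      = fun k : ℕ => X 0 ^ k * (s1 + X 0) ^ (d - k) := by
    funext k
    congr 2
    rw [two_smul, s1]
    ring
  rw [hPhi, hgen, Submodule.map_span]
  have himg : (⇑Phi '' ((fun k : ℕ => X 0 ^ k * (s1 + X 0) ^ (d - k)) '' {k : ℕ | k ≤ d}))
      = ((fun k : ℕ => Phi (X 0 ^ k * (s1 + X 0) ^ (d - k))) '' {k : ℕ | k ≤ d}) := by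
    rw [← Set.image_comp]
    rfl
  rw [himg, span_eq d hd]
  have hset : ((fun j => s1 ^ j * ps (d - j)) '' {j : ℕ | j ≤ d - 1})
      = Set.range (fun j : Fin d => s1 ^ (j : ℕ) * ps (d - (j : ℕ))) := by
    ext x
    constructor
    · rintro ⟨j, hj, rfl⟩
      have hj' : j ≤ d - 1 := hj
      exact ⟨⟨j, by omega⟩, rfl⟩
    · rintro ⟨i, rfl⟩
      exact ⟨(i : ℕ), (by have := i.isLt; omega : (i : ℕ) ≤ d - 1), rfl⟩
  rw [hset, finrank_span_eq_card (li d hd), Fintype.card_fin]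
end
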